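/- arXiv:2107.07034 — 3 statements merged into one kernel-verified Lean document; each statement's English description precedes it below -/
import Mathlib

section
/- Let f = [[λ, 0],[0, 1/λ]] with λ ≠ 0, ±1, and let g ∈ SL(2,ℂ) with tr(g) = 0. If γ(f,g) = β(f), then g = [[0, μ],[−1/μ, 0]] for some μ ≠ 0, and consequently g f g⁻¹ = f⁻¹. -/
/-!
By Fricke's identity, for `f, g ∈ SL(2)` with `tr g = 0` one has
`tr [f, g] - 2 = (tr f)² - 4 + tr (f g)²`, so the hypothesis says exactly `tr (f g) = 0`.
For diagonal `f = diag(λ, λ⁻¹)` and traceless `g` this is `(λ - λ⁻¹) g₀₀ = 0`, and `λ² ≠ 1`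
forces `g₀₀ = 0`. A traceless matrix of determinant one with vanishing diagonal is
antidiagonal, and conjugating a diagonal matrix by an antidiagonal one swaps its entries.
-/

namespace Matrix

theorem inv_eq_adjugate_of_det_eq_one {R n : Type*} [CommRing R] [Fintype n] [DecidableEq n]
    {A : Matrix n n R} (hA : A.det = 1) : A⁻¹ = A.adjugate := by
  rw [inv_def, hA, Ring.inverse_one, one_smul]

/-- Fricke's trace identity for the commutator in `SL(2)`. -/
theorem trace_commutator_fin_two {R : Type*} [CommRing R] {A B : Matrix (Fin 2) (Fin 2) R}
    (hA : A.det = 1) (hB : B.det = 1) :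
    trace (A * B * A⁻¹ * B⁻¹) = trace A ^ 2 + trace B ^ 2 + trace (A * B) ^ 2
      - trace A * trace B * trace (A * B) - 2 := by
  rw [inv_eq_adjugate_of_det_eq_one hA, inv_eq_adjugate_of_det_eq_one hB]
  rw [det_fin_two] at hA hB
  rw [eta_fin_two A, eta_fin_two B]
  simp only [adjugate_fin_two_of, mul_fin_two, trace_fin_two_of]
  linear_combination ((B 0 0 + B 1 1) ^ 2 - 2 * (B 0 0 * B 1 1 - B 0 1 * B 1 0)) * hA
    + ((A 0 0 + A 1 1) ^ 2 - 2) * hB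

theorem trace_fin_two_diag_mul {R : Type*} [Semiring R] (x y : R)
    (A : Matrix (Fin 2) (Fin 2) R) : trace (!![x, 0; 0, y] * A) = x * A 0 0 + y * A 1 1 := by
  rw [eta_fin_two A]
  simp [trace_fin_two_of]

variable {K : Type*} [Field K]

theorem exists_eq_antidiagonal_of_det_eq_one {g : Matrix (Fin 2) (Fin 2) K} (hdet : g.det = 1)
    (htr : trace g = 0) (h00 : g 0 0 = 0) : ∃ μ : K, μ ≠ 0 ∧ g = !![0, μ; -μ⁻¹, 0] := by
  rw [det_fin_two, h00, zero_mul, zero_sub] at hdet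
  have hμ : g 0 1 ≠ 0 := fun h => by simp [h] at hdet
  have h10 : g 1 0 = -(g 0 1)⁻¹ := by
    field_simp
    linear_combination -hdet
  rw [trace_fin_two, h00, zero_add] at htr
  refine ⟨g 0 1, hμ, ?_⟩
  ext i j
  fin_cases i <;> fin_cases j <;> simp [h00, h10, htr]

theorem antidiagonal_mul_diag_mul_inv {μ : K} (hμ : μ ≠ 0) (x y : K) :
    !![0, μ; -μ⁻¹, 0] * !![x, 0; 0, y] * (!![0, μ; -μ⁻¹, 0])⁻¹ = !![y, 0; 0, x] := by
  rw [inv_eq_adjugate_of_det_eq_one (by simp [det_fin_two_of, hμ]), adjugate_fin_two_of]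
  simp only [mul_fin_two, mul_zero, zero_mul, add_zero, zero_add]
  field_simp

end Matrix

theorem sub_inv_ne_zero {K : Type*} [Field K] {x : K} (h0 : x ≠ 0) (h1 : x ≠ 1) (h2 : x ≠ -1) :
    x - x⁻¹ ≠ 0 := by
  have hx : x - x⁻¹ = (x - 1) * (x + 1) / x := by
    field_simp
    ring
  rw [hx]
  exact div_ne_zero (mul_ne_zero (sub_ne_zero.mpr h1) (fun h => h2 (eq_neg_of_add_eq_zero_left h)))
    h0

open Matrix

theorem stmt_4 (lam : ℂ) (hlam : lam ≠ 0) (h1 : lam ≠ 1) (h2 : lam ≠ -1)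
    (g : Matrix (Fin 2) (Fin 2) ℂ) (hdetg : g.det = 1) (htrg : Matrix.trace g = 0)
    (f : Matrix (Fin 2) (Fin 2) ℂ) (hf : f = !![lam, 0; 0, lam⁻¹])
    (hgb : Matrix.trace (f * g * f⁻¹ * g⁻¹) - 2 = Matrix.trace f ^ 2 - 4) :
    (∃ μ : ℂ, μ ≠ 0 ∧ g = !![0, μ; -μ⁻¹, 0]) ∧ g * f * g⁻¹ = f⁻¹ := by
  have hdetf : f.det = 1 := by simp [hf, det_fin_two_of, hlam]
  have htrfg : trace (f * g) = 0 := by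
    have hfricke := trace_commutator_fin_two hdetf hdetg
    rw [htrg] at hfricke
    exact pow_eq_zero_iff two_ne_zero |>.mp (by linear_combination hgb - hfricke)
  have hg00 : g 0 0 = 0 := by
    rw [hf, trace_fin_two_diag_mul] at htrfg
    have hsum := trace_fin_two g
    exact (mul_eq_zero.mp (by linear_combination htrfg - lam⁻¹ * (htrg - hsum))).resolve_left
      (sub_inv_ne_zero hlam h1 h2)
  obtain ⟨μ, hμ, rfl⟩ := exists_eq_antidiagonal_of_det_eq_one hdetg htrg hg00
  refine ⟨⟨μ, hμ, rfl⟩, ?_⟩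
  rw [inv_eq_adjugate_of_det_eq_one hdetf, hf, antidiagonal_mul_diag_mul_inv hμ,
    adjugate_fin_two_of, neg_zero]
end

section
/- Suppose ⟨f, g⟩ is a non-elementary discrete (Kleinian) subgroup of PSL(2,ℂ) with tr(g)² ≠ 0 (g not of order 2 when tr(g)² − 4 ≠ −4, i.e., tr(g) ≠ 0). Then the fixed-point sets of f and of g f g⁻¹ on the Riemann sphere are disjoint: Fix(f) ∩ Fix(g f g⁻¹) = ∅. -/
/-- Abstract formulation of Lemma on fixed points: `G` is the group of Möbius
transformations acting on the Riemann sphere `X`. `Fix h` is the fixed-point set.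
Hypotheses encode: f and g share no fixed point (as ⟨f,g⟩ is Kleinian, γ ≠ 0);
a Möbius transformation has at least one and at most two fixed points;
two such elements of a discrete non-elementary group cannot share exactly one
fixed point (so if the fixed sets of f and gfg⁻¹ meet, they coincide);
an element fixing three distinct points is the identity; and tr(g) ≠ 0, i.e. g² ≠ 1.
Conclusion: Fix(f) ∩ Fix(g f g⁻¹) = ∅. -/
theorem stmt_7 {G : Type*} [Group G] {X : Type*} [MulAction G X] (f g : G)
    (Fix : G → Set X) (hFix : ∀ h : G, Fix h = {x : X | h • x = x})
    (hshare : Fix f ∩ Fix g = ∅)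
    (hfcard : (Fix f).Nonempty ∧ (Fix f).encard ≤ 2)
    (hgne : (Fix g).Nonempty)
    (hone : (Fix f ∩ Fix (g * f * g⁻¹)).Nonempty → Fix f = Fix (g * f * g⁻¹))
    (hthree : ∀ h : G, 3 ≤ (Fix h).encard → h = 1)
    (hg2 : g ^ 2 ≠ 1) :
    Fix f ∩ Fix (g * f * g⁻¹) = ∅ := by
  by_contra hne
  have hNE : (Fix f ∩ Fix (g * f * g⁻¹)).Nonempty :=
    Set.nonempty_iff_ne_empty.mpr hne
  have hE : Fix f = Fix (g * f * g⁻¹) := hone hNE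
  -- g maps Fix f into Fix f
  have hmap : ∀ x ∈ Fix f, g • x ∈ Fix f := by
    intro x hx
    rw [hE, hFix]
    rw [hFix] at hx
    simp only [Set.mem_setOf_eq] at hx ⊢
    simp [mul_smul, hx]
  -- a point not shared with Fix g
  have hnotg : ∀ x ∈ Fix f, x ∉ Fix g := by
    intro x hx hxg
    exact absurd hshare (by
      apply Set.nonempty_iff_ne_empty.mp
      exact ⟨x, hx, hxg⟩)
  obtain ⟨hfne, hfle⟩ := hfcard
  -- encard is 1 or 2
  have h1le : 1 ≤ (Fix f).encard := Set.one_le_encard_iff_nonempty.mpr hfne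
  have h12 : (Fix f).encard = 1 ∨ (Fix f).encard = 2 := by
    rcases eq_or_lt_of_le hfle with h | h
    · right; exact h
    · left
      refine le_antisymm ?_ h1le
      have h2 : (2 : ℕ∞) = 1 + 1 := rfl
      rw [h2] at h
      exact (ENat.lt_add_one_iff (by norm_num)).mp h
  rcases h12 with h | h
  · -- encard = 1
    obtain ⟨x, hx⟩ := Set.encard_eq_one.mp h
    have hxin : x ∈ Fix f := by rw [hx]; rfl
    have := hmap x hxin
    rw [hx, Set.mem_singleton_iff] at this
    exact hnotg x hxin (by rw [hFix]; exact this)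
  · -- encard = 2
    obtain ⟨x, y, hxy, hx⟩ := Set.encard_eq_two.mp h
    have hxin : x ∈ Fix f := by rw [hx]; left; rfl
    have hyin : y ∈ Fix f := by rw [hx]; right; rfl
    have hgx : g • x ∈ Fix f := hmap x hxin
    have hgy : g • y ∈ Fix f := hmap y hyin
    rw [hx] at hgx hgy
    -- g must swap x and y
    have hgxy : g • x = y := by
      rcases hgx with h' | h'
      · exact absurd (by rw [hFix]; exact h') (hnotg x hxin)
      · exact h'
    have hgyx : g • y = x := by
      rcases hgy with h' | h'
      · exact h'
      · exact absurd (by rw [hFix]; exact h') (hnotg y hyin)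
    -- g^2 fixes x, y, and a fixed point z of g
    obtain ⟨z, hz⟩ := hgne
    have hzg : g • z = z := by rw [hFix] at hz; exact hz
    have hzx : z ≠ x := fun h' => hnotg x hxin (h' ▸ hz)
    have hzy : z ≠ y := fun h' => hnotg y hyin (h' ▸ hz)
    have hsub : ({x, y, z} : Set X) ⊆ Fix (g ^ 2) := by
      intro w hw
      rw [hFix]
      simp only [Set.mem_setOf_eq, pow_two, mul_smul]
      rcases hw with h' | h' | h' <;> subst h' <;>
        simp [hgxy, hgyx, hzg]
    have h3 : ({x, y, z} : Set X).encard = 3 :=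
      Set.encard_eq_three.mpr ⟨x, y, z, hxy, Ne.symm hzx, Ne.symm hzy, rfl⟩
    have := hthree (g ^ 2) (h3 ▸ Set.encard_le_encard hsub)
    exact hg2 this
end

section
/- Let g = [[e^{iφ},0],[0,e^{−iφ}]] and f = R·g'·R⁻¹, where g' = [[e^{iψ},0],[0,e^{−iψ}]] and R is the rotation matrix [[cos(θ/2), −sin(θ/2)],[sin(θ/2), cos(θ/2)]], so that f and g are elliptic in SL(2,ℂ) with axes meeting at the origin of hyperbolic 3-space at angle θ. Then the commutator parameter satisfies γ(f,g) = −(β(f)β(g)/4)·sin²(θ). -/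
open Complex

set_option maxHeartbeats 1000000 in
theorem stmt_19 (φ ψ θ : ℝ) :
    let R : Matrix (Fin 2) (Fin 2) ℂ :=
      !![(Real.cos (θ / 2) : ℂ), -(Real.sin (θ / 2) : ℂ);
         (Real.sin (θ / 2) : ℂ), (Real.cos (θ / 2) : ℂ)]
    let f : Matrix (Fin 2) (Fin 2) ℂ :=
      R * !![Complex.exp (I * ψ), 0; 0, Complex.exp (-(I * ψ))] * R⁻¹
    let g : Matrix (Fin 2) (Fin 2) ℂ :=
      !![Complex.exp (I * φ), 0; 0, Complex.exp (-(I * φ))]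
    Matrix.trace (f * g * f⁻¹ * g⁻¹) - 2 =
      -((Matrix.trace f ^ 2 - 4) * (Matrix.trace g ^ 2 - 4) / 4) *
        (Real.sin θ : ℂ) ^ 2 := by
  intro R f g
  have hc : (Real.cos (θ/2) : ℂ) ^ 2 + (Real.sin (θ/2) : ℂ) ^ 2 = 1 := by
    norm_cast; rw [add_comm]; exact Real.sin_sq_add_cos_sq _
  set c := (Real.cos (θ/2) : ℂ) with hcdef
  set s := (Real.sin (θ/2) : ℂ) with hsdef
  set a := Complex.exp (I * ψ) with hadef
  set b := Complex.exp (I * φ) with hbdef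
  have ha : Complex.exp (-(I*ψ)) = a⁻¹ := by rw [Complex.exp_neg]
  have hb : Complex.exp (-(I*φ)) = b⁻¹ := by rw [Complex.exp_neg]
  have ha0 : a ≠ 0 := Complex.exp_ne_zero _
  have hb0 : b ≠ 0 := Complex.exp_ne_zero _
  have haa : a * a⁻¹ = 1 := mul_inv_cancel₀ ha0
  have hbb : b * b⁻¹ = 1 := mul_inv_cancel₀ hb0
  have hR : R⁻¹ = !![c, s; -s, c] := by
    rw [Matrix.inv_eq_right_inv]
    show R * _ = 1
    rw [Matrix.one_fin_two]
    simp only [R, Matrix.mul_fin_two]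
    ext i j
    fin_cases i <;> fin_cases j <;>
      simp only [Matrix.cons_val', Matrix.cons_val_zero, Matrix.cons_val_one,
        Matrix.head_cons, Matrix.head_fin_const, Matrix.of_apply, Matrix.empty_val',
        Matrix.cons_val_fin_one, Fin.mk_zero, Fin.mk_one, Fin.isValue] <;>
      first | linear_combination hc | linear_combination -hc | ring
  have hfval : f = !![a*c^2 + a⁻¹*s^2, (a - a⁻¹)*s*c; (a - a⁻¹)*s*c, a*s^2 + a⁻¹*c^2] := by
    show R * !![a, 0; 0, Complex.exp (-(I*ψ))] * R⁻¹ = _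
    rw [ha, hR]
    simp only [R, Matrix.mul_fin_two]
    ext i j
    fin_cases i <;> fin_cases j <;>
      simp only [Matrix.cons_val', Matrix.cons_val_zero, Matrix.cons_val_one,
        Matrix.head_cons, Matrix.head_fin_const, Matrix.of_apply, Matrix.empty_val',
        Matrix.cons_val_fin_one, Fin.mk_zero, Fin.mk_one, Fin.isValue] <;>
      ring
  have hfinv : f⁻¹ = !![a⁻¹*c^2 + a*s^2, (a⁻¹ - a)*s*c; (a⁻¹ - a)*s*c, a⁻¹*s^2 + a*c^2] := by
    rw [Matrix.inv_eq_right_inv]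
    rw [hfval, Matrix.mul_fin_two, Matrix.one_fin_two]
    ext i j
    fin_cases i <;> fin_cases j <;>
      simp only [Matrix.cons_val', Matrix.cons_val_zero, Matrix.cons_val_one,
        Matrix.head_cons, Matrix.head_fin_const, Matrix.of_apply, Matrix.empty_val',
        Matrix.cons_val_fin_one, Fin.mk_zero, Fin.mk_one, Fin.isValue] <;>
      first
        | linear_combination (c^2+s^2)^2 * haa + (c^2+s^2+1) * hc
        | linear_combination (c*s*(c^2+s^2) - c*s) * haa
        | ring
  have hginv : g⁻¹ = !![b⁻¹, 0; 0, b] := by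
    rw [Matrix.inv_eq_right_inv]
    show (!![b, 0; 0, Complex.exp (-(I*φ))] : Matrix (Fin 2) (Fin 2) ℂ) * _ = 1
    rw [hb, Matrix.mul_fin_two, Matrix.one_fin_two]
    ext i j
    fin_cases i <;> fin_cases j <;>
      simp only [Matrix.cons_val', Matrix.cons_val_zero, Matrix.cons_val_one,
        Matrix.head_cons, Matrix.head_fin_const, Matrix.of_apply, Matrix.empty_val',
        Matrix.cons_val_fin_one, Fin.mk_zero, Fin.mk_one, Fin.isValue] <;>
      first | linear_combination hbb | linear_combination -hbb | ring
  have hgval : g = !![b, 0; 0, b⁻¹] := by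
    show (!![b, 0; 0, Complex.exp (-(I*φ))] : Matrix (Fin 2) (Fin 2) ℂ) = _
    rw [hb]
  have hsin : (Real.sin θ : ℂ) = 2 * s * c := by
    have h : Real.sin θ = 2 * Real.sin (θ/2) * Real.cos (θ/2) := by
      rw [← Real.sin_two_mul]; congr 1; ring
    rw [h, hcdef, hsdef, Complex.ofReal_mul, Complex.ofReal_mul, Complex.ofReal_ofNat]
  rw [hfinv, hginv, hgval, hfval, hsin]
  rw [Matrix.mul_fin_two, Matrix.mul_fin_two, Matrix.mul_fin_two,
    Matrix.trace_fin_two_of, Matrix.trace_fin_two_of, Matrix.trace_fin_two_of]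
  linear_combination ((-8:ℂ)*c^2*s^6 + (-16:ℂ)*c^4*s^4 + (-8:ℂ)*c^6*s^2 + (2:ℂ)*b⁻¹^2*c^2*s^2 + (2:ℂ)*b⁻¹^2*c^2*s^6 + (4:ℂ)*b⁻¹^2*c^4*s^4 + (2:ℂ)*b⁻¹^2*c^6*s^2 + (2:ℂ)*b*b⁻¹*s^4 + (4:ℂ)*b*b⁻¹*c^2*s^6 + (2:ℂ)*b*b⁻¹*c^4 + (8:ℂ)*b*b⁻¹*c^4*s^4 + (4:ℂ)*b*b⁻¹*c^6*s^2 + (2:ℂ)*b^2*c^2*s^2 + (2:ℂ)*b^2*c^2*s^6 + (4:ℂ)*b^2*c^4*s^4 + (2:ℂ)*b^2*c^6*s^2) * haa + ((2:ℂ)*s^4 + (-8:ℂ)*c^2*s^2 + (4:ℂ)*c^2*s^6 + (2:ℂ)*c^4 + (8:ℂ)*c^4*s^4 + (4:ℂ)*c^6*s^2 + (2:ℂ)*a⁻¹^2*c^2*s^2 + (2:ℂ)*a⁻¹^2*c^2*s^6 + (4:ℂ)*a⁻¹^2*c^4*s^4 + (2:ℂ)*a⁻¹^2*c^6*s^2 +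 (2:ℂ)*a^2*c^2*s^2 + (2:ℂ)*a^2*c^2*s^6 + (4:ℂ)*a^2*c^4*s^4 + (2:ℂ)*a^2*c^6*s^2) * hbb + ((2:ℂ) + (2:ℂ)*s^2 + (2:ℂ)*c^2 + (-4:ℂ)*c^2*s^2 + (-4:ℂ)*c^2*s^4 + (-4:ℂ)*c^4*s^2 + (2:ℂ)*b⁻¹^2*c^2*s^2 + (2:ℂ)*b⁻¹^2*c^2*s^4 + (2:ℂ)*b⁻¹^2*c^4*s^2 + (2:ℂ)*b^2*c^2*s^2 + (2:ℂ)*b^2*c^2*s^4 + (2:ℂ)*b^2*c^4*s^2 + (-2:ℂ)*a⁻¹^2*c^2*s^2 + (-2:ℂ)*a⁻¹^2*c^2*s^4 + (-2:ℂ)*a⁻¹^2*c^4*s^2 + (1:ℂ)*a⁻¹^2*b⁻¹^2*c^2*s^2 + (1:ℂ)*a⁻¹^2*b⁻¹^2*c^2*s^4 + (1:ℂ)*a⁻¹^2*b⁻¹^2*c^4*s^2 + (1:ℂ)*a⁻¹^2*b^2*c^2*s^2 + (1:ℂ)*a⁻¹^2*b^2*c^2*s^4 + (1:ℂ)*a⁻¹^2*b^2*c^4*s^2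 + (-2:ℂ)*a^2*c^2*s^2 + (-2:ℂ)*a^2*c^2*s^4 + (-2:ℂ)*a^2*c^4*s^2 + (1:ℂ)*a^2*b⁻¹^2*c^2*s^2 + (1:ℂ)*a^2*b⁻¹^2*c^2*s^4 + (1:ℂ)*a^2*b⁻¹^2*c^4*s^2 + (1:ℂ)*a^2*b^2*c^2*s^2 + (1:ℂ)*a^2*b^2*c^2*s^4 + (1:ℂ)*a^2*b^2*c^4*s^2) * hc
end
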